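/- arXiv:1707.05662 — 7 statements merged into one kernel-verified Lean document; each statement's English description precedes it below -/
import Mathlib

section
/- Let X and Y be Poisson Binomial Distributions (sums of independent Bernoulli random variables) with means μ_X, μ_Y and variances σ_X², σ_Y². For any ε > 0 such that σ_X², σ_Y² ≥ ln(2/(1-ε)), if |μ_Y - μ_X| > 2√(ln(2/(1-ε)))·(σ_X + σ_Y), then the total variation distance between X and Y is greater than ε. -/
/-- Mass function of the Poisson Binomial Distribution with the given list of
    Bernoulli parameters: the distribution of the sum of independent Bernoulli
    random variables with these expectations (defined by convolution). -/
noncomputable def pbd : List ℝ → ℕ → ℝ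
  | [], k => if k = 0 then 1 else 0
  | p :: ps, k => (1 - p) * pbd ps k + p * (if k = 0 then 0 else pbd ps (k - 1))

/-- Mean of a distribution on `ℕ` given by its mass function. -/
noncomputable def pmfMean (f : ℕ → ℝ) : ℝ := ∑' k : ℕ, (k : ℝ) * f k

/-- Variance of a distribution on `ℕ` given by its mass function. -/
noncomputable def pmfVar (f : ℕ → ℝ) : ℝ := ∑' k : ℕ, ((k : ℝ) - pmfMean f) ^ 2 * f k

/-- Total variation distance of two distributions on `ℕ` given by their mass
    functions. -/
noncomputable def tvDist (f g : ℕ → ℝ) : ℝ := (1 / 2) * ∑' k, |f k - g k|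

/-!
Let `L = log (2 / (1 - ε))`. For `|u| ≤ 1` a centred Bernoulli variable with parameter `p` has
moment generating function at most `exp (3/4 u² p(1-p))`, so Chernoff's bound with
`u = √(L / V)` shows that a PBD with mean `μ` and variance `V ≥ L` deviates from `μ` by more than
`2√(L V)` in a given direction with probability at most `exp (-5L/4) < exp (-L)`.
Only one-sided tails are needed: the half-line of points within `2√(L V_X)` of `μ_X` on the side
of `μ_Y` has `X`-mass above `1 - exp (-L)` and `Y`-mass below `exp (-L)`, hence
`d_TV(X, Y) > 1 - 2 exp (-L) = ε`.
-/

open Finset Real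

theorem Real.exp_le_one_add_add_sq_of_abs_le_one {y : ℝ} (hy : |y| ≤ 1) :
    exp y ≤ 1 + y + 3 / 4 * y ^ 2 := by
  have h := (abs_le.1 (exp_bound hy (n := 2) two_pos)).2
  norm_num [Finset.sum_range_succ, Nat.factorial, sq_abs] at h
  linarith

theorem bernoulli_mgf_le {p u : ℝ} (hp : p ∈ Set.Icc (0 : ℝ) 1) (hu : |u| ≤ 1) :
    (1 - p) * exp (-(u * p)) + p * exp (u * (1 - p)) ≤ exp (3 / 4 * u ^ 2 * (p * (1 - p))) := by
  obtain ⟨hp0, hp1⟩ := hp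
  have hneg : exp (-(u * p)) ≤ 1 - u * p + 3 / 4 * (u * p) ^ 2 := by
    have := Real.exp_le_one_add_add_sq_of_abs_le_one (y := -(u * p)) (by
      rw [abs_neg, abs_mul, abs_of_nonneg hp0]; nlinarith [abs_nonneg u])
    simpa [neg_sq, sub_eq_add_neg] using this
  have hpos : exp (u * (1 - p)) ≤ 1 + u * (1 - p) + 3 / 4 * (u * (1 - p)) ^ 2 :=
    Real.exp_le_one_add_add_sq_of_abs_le_one (by
      rw [abs_mul, abs_of_nonneg (sub_nonneg.2 hp1)]; nlinarith [abs_nonneg u])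
  calc (1 - p) * exp (-(u * p)) + p * exp (u * (1 - p))
      ≤ (1 - p) * (1 - u * p + 3 / 4 * (u * p) ^ 2)
        + p * (1 + u * (1 - p) + 3 / 4 * (u * (1 - p)) ^ 2) := by
        gcongr
    _ = 3 / 4 * u ^ 2 * (p * (1 - p)) + 1 := by ring
    _ ≤ exp (3 / 4 * u ^ 2 * (p * (1 - p))) := add_one_le_exp _

theorem pbd_nonneg {ps : List ℝ} (hps : ∀ p ∈ ps, p ∈ Set.Icc (0 : ℝ) 1) (k : ℕ) :
    0 ≤ pbd ps k := by
  induction ps generalizing k with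
  | nil => unfold pbd; positivity
  | cons p ps ih =>
    have hp1 : 0 ≤ 1 - p := sub_nonneg.2 (hps p List.mem_cons_self).2
    have hp0 : 0 ≤ p := (hps p List.mem_cons_self).1
    have ih' : ∀ j, 0 ≤ pbd ps j := ih fun q hq => hps q (List.mem_cons_of_mem p hq)
    have hprev : 0 ≤ if k = 0 then 0 else pbd ps (k - 1) := by split_ifs <;> simp [ih']
    have hk := ih' k
    unfold pbd
    positivity

theorem pbd_eq_zero_of_length_lt {ps : List ℝ} {k : ℕ} (hk : ps.length < k) : pbd ps k = 0 := by
  induction ps generalizing k with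
  | nil => simp only [pbd]; rw [if_neg (by simp at hk; omega)]
  | cons p ps ih =>
    simp only [List.length_cons] at hk
    simp only [pbd, if_neg (show k ≠ 0 by omega), ih (by omega : ps.length < k),
      ih (by omega : ps.length < k - 1)]
    ring

noncomputable def pbdExpect (ps : List ℝ) (g : ℕ → ℝ) : ℝ :=
  ∑ k ∈ range (ps.length + 1), g k * pbd ps k

noncomputable def pbdProb (ps : List ℝ) (s : Set ℕ) : ℝ := pbdExpect ps (s.indicator 1)

theorem sum_range_mul_pbd {ps : List ℝ} {N : ℕ} (hN : ps.length < N) (g : ℕ → ℝ) :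
    ∑ k ∈ range N, g k * pbd ps k = pbdExpect ps g := by
  refine (sum_subset (range_subset_range.2 hN) fun k _ hk => ?_).symm
  rw [pbd_eq_zero_of_length_lt (by simpa using hk), mul_zero]

theorem tsum_mul_pbd (ps : List ℝ) (g : ℕ → ℝ) : ∑' k, g k * pbd ps k = pbdExpect ps g :=
  tsum_eq_sum fun k hk => by rw [pbd_eq_zero_of_length_lt (by simpa using hk), mul_zero]

theorem pbdExpect_cons (p : ℝ) (ps : List ℝ) (g : ℕ → ℝ) :
    pbdExpect (p :: ps) g = (1 - p) * pbdExpect ps g + p * pbdExpect ps fun k => g (k + 1) := by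
  have hshift : ∑ k ∈ range (ps.length + 2), g k * (if k = 0 then 0 else pbd ps (k - 1))
      = pbdExpect ps fun k => g (k + 1) := by
    simp [sum_range_succ' _ (ps.length + 1), pbdExpect]
  have hsplit : pbdExpect (p :: ps) g = (1 - p) * ∑ k ∈ range (ps.length + 2), g k * pbd ps k
      + p * ∑ k ∈ range (ps.length + 2), g k * (if k = 0 then 0 else pbd ps (k - 1)) := by
    simp only [pbdExpect, List.length_cons, pbd, mul_sum, ← sum_add_distrib]
    exact sum_congr rfl fun k _ => by ring
  rw [hsplit, hshift, sum_range_mul_pbd (by omega)]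

theorem pbdExpect_add (ps : List ℝ) (f g : ℕ → ℝ) :
    pbdExpect ps (fun k => f k + g k) = pbdExpect ps f + pbdExpect ps g := by
  simp only [pbdExpect, add_mul, sum_add_distrib]

theorem pbdExpect_sub (ps : List ℝ) (f g : ℕ → ℝ) :
    pbdExpect ps (fun k => f k - g k) = pbdExpect ps f - pbdExpect ps g := by
  simp only [pbdExpect, sub_mul, sum_sub_distrib]

theorem pbdExpect_const_mul (ps : List ℝ) (c : ℝ) (g : ℕ → ℝ) :
    pbdExpect ps (fun k => c * g k) = c * pbdExpect ps g := by
  simp only [pbdExpect, mul_sum, mul_assoc]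

theorem pbdExpect_const (ps : List ℝ) (c : ℝ) : pbdExpect ps (fun _ => c) = c := by
  induction ps with
  | nil => simp [pbdExpect, pbd]
  | cons p ps ih => rw [pbdExpect_cons, ih]; ring

theorem pbdExpect_mono {ps : List ℝ} (hps : ∀ p ∈ ps, p ∈ Set.Icc (0 : ℝ) 1) {f g : ℕ → ℝ}
    (hfg : ∀ k, f k ≤ g k) : pbdExpect ps f ≤ pbdExpect ps g :=
  sum_le_sum fun k _ => mul_le_mul_of_nonneg_right (hfg k) (pbd_nonneg hps k)

theorem pbdExpect_id (ps : List ℝ) : pbdExpect ps (fun k => (k : ℝ)) = ps.sum := by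
  induction ps with
  | nil => simp [pbdExpect, pbd]
  | cons p ps ih =>
    simp only [pbdExpect_cons, Nat.cast_add, Nat.cast_one, pbdExpect_add, pbdExpect_const, ih,
      List.sum_cons]
    ring

theorem pbdExpect_sub_sum_sq_add (ps : List ℝ) (a : ℝ) :
    pbdExpect ps (fun k => ((k : ℝ) - ps.sum + a) ^ 2)
      = pbdExpect ps (fun k => ((k : ℝ) - ps.sum) ^ 2) + a ^ 2 := by
  have hcentered : pbdExpect ps (fun k => (k : ℝ) - ps.sum) = 0 := by
    rw [pbdExpect_sub, pbdExpect_id, pbdExpect_const, sub_self]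
  have hexpand : (fun k : ℕ => ((k : ℝ) - ps.sum + a) ^ 2)
      = fun k : ℕ => ((k : ℝ) - ps.sum) ^ 2 + ((2 * a) * ((k : ℝ) - ps.sum) + a ^ 2) := by
    funext k; ring
  rw [hexpand, pbdExpect_add, pbdExpect_add, pbdExpect_const_mul, hcentered, pbdExpect_const]
  ring

theorem pbdExpect_sub_sum_sq (ps : List ℝ) :
    pbdExpect ps (fun k => ((k : ℝ) - ps.sum) ^ 2) = (ps.map fun p => p * (1 - p)).sum := by
  induction ps with
  | nil => simp [pbdExpect, pbd]
  | cons p ps ih =>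
    have hstay : (fun k : ℕ => ((k : ℝ) - (p :: ps).sum) ^ 2)
        = fun k : ℕ => ((k : ℝ) - ps.sum + -p) ^ 2 := by
      funext k; rw [List.sum_cons]; ring
    have hstep : (fun k : ℕ => (((k + 1 : ℕ) : ℝ) - (p :: ps).sum) ^ 2)
        = fun k : ℕ => ((k : ℝ) - ps.sum + (1 - p)) ^ 2 := by
      funext k; push_cast [List.sum_cons]; ring
    rw [pbdExpect_cons, hstay, hstep, pbdExpect_sub_sum_sq_add, pbdExpect_sub_sum_sq_add, ih,
      List.map_cons, List.sum_cons]
    ring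

theorem pmfMean_pbd (ps : List ℝ) : pmfMean (pbd ps) = ps.sum := by
  rw [pmfMean, tsum_mul_pbd, pbdExpect_id]

theorem pmfVar_pbd (ps : List ℝ) : pmfVar (pbd ps) = (ps.map fun p => p * (1 - p)).sum := by
  rw [pmfVar, tsum_mul_pbd, pmfMean_pbd, pbdExpect_sub_sum_sq]

theorem pmfVar_nonneg {f : ℕ → ℝ} (hf : ∀ k, 0 ≤ f k) : 0 ≤ pmfVar f :=
  tsum_nonneg fun k => mul_nonneg (sq_nonneg _) (hf k)

theorem pbdExpect_exp_le {ps : List ℝ} (hps : ∀ p ∈ ps, p ∈ Set.Icc (0 : ℝ) 1) {u : ℝ}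
    (hu : |u| ≤ 1) : pbdExpect ps (fun k => exp (u * ((k : ℝ) - ps.sum)))
      ≤ exp (3 / 4 * u ^ 2 * (ps.map fun p => p * (1 - p)).sum) := by
  induction ps with
  | nil => simp [pbdExpect, pbd]
  | cons p ps ih =>
    have hps' : ∀ q ∈ ps, q ∈ Set.Icc (0 : ℝ) 1 := fun q hq => hps q (List.mem_cons_of_mem p hq)
    have hstay : (fun k : ℕ => exp (u * ((k : ℝ) - (p :: ps).sum)))
        = fun k : ℕ => exp (-(u * p)) * exp (u * ((k : ℝ) - ps.sum)) := by
      funext k; rw [← exp_add, List.sum_cons]; ring_nf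
    have hstep : (fun k : ℕ => exp (u * (((k + 1 : ℕ) : ℝ) - (p :: ps).sum)))
        = fun k : ℕ => exp (u * (1 - p)) * exp (u * ((k : ℝ) - ps.sum)) := by
      funext k; rw [← exp_add]; push_cast [List.sum_cons]; ring_nf
    have hmgf_nonneg : 0 ≤ pbdExpect ps (fun k => exp (u * ((k : ℝ) - ps.sum))) := by
      simpa [pbdExpect_const] using pbdExpect_mono hps' (f := fun _ => 0) fun k => (exp_pos _).le
    rw [pbdExpect_cons, hstay, hstep, pbdExpect_const_mul, pbdExpect_const_mul, List.map_cons,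
      List.sum_cons, mul_add, exp_add, ← mul_assoc, ← mul_assoc, ← add_mul]
    exact mul_le_mul (bernoulli_mgf_le (hps p List.mem_cons_self) hu) (ih hps') hmgf_nonneg
      (exp_pos _).le

theorem pbdProb_le_pbdExpect {ps : List ℝ} (hps : ∀ p ∈ ps, p ∈ Set.Icc (0 : ℝ) 1) {s : Set ℕ}
    {w : ℕ → ℝ} (hw0 : ∀ k, 0 ≤ w k) (hw1 : ∀ k ∈ s, 1 ≤ w k) : pbdProb ps s ≤ pbdExpect ps w :=
  pbdExpect_mono hps fun k => by by_cases hk : k ∈ s <;> simp [hk, hw0, hw1]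

theorem pbdProb_mono {ps : List ℝ} (hps : ∀ p ∈ ps, p ∈ Set.Icc (0 : ℝ) 1) {s t : Set ℕ}
    (hst : s ⊆ t) : pbdProb ps s ≤ pbdProb ps t :=
  pbdProb_le_pbdExpect hps (Set.indicator_nonneg fun _ _ => zero_le_one) fun k hk => by
    simp [hst hk]

theorem pbdProb_compl (ps : List ℝ) (s : Set ℕ) : pbdProb ps sᶜ = 1 - pbdProb ps s := by
  have h := pbdExpect_add ps (sᶜ.indicator 1) (s.indicator 1)
  simp only [Set.indicator_compl_add_self_apply, Pi.one_apply, pbdExpect_const] at h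
  rw [pbdProb, pbdProb]
  linarith

theorem pbdProb_tail_le {ps : List ℝ} (hps : ∀ p ∈ ps, p ∈ Set.Icc (0 : ℝ) 1) {σ : ℝ}
    (hσ : |σ| = 1) (t : ℝ) {s : ℝ} (hs0 : 0 ≤ s) (hs1 : s ≤ 1) :
    pbdProb ps {k | t < σ * ((k : ℝ) - ps.sum)}
      ≤ exp (-(s * t) + 3 / 4 * s ^ 2 * (ps.map fun p => p * (1 - p)).sum) := by
  have hweight : ∀ k ∈ {k : ℕ | t < σ * ((k : ℝ) - ps.sum)},
      1 ≤ exp (-(s * t)) * exp (s * σ * ((k : ℝ) - ps.sum)) := by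
    intro k (hk : t < σ * ((k : ℝ) - ps.sum))
    rw [← exp_add]
    exact one_le_exp (by nlinarith [hk.le])
  calc pbdProb ps {k | t < σ * ((k : ℝ) - ps.sum)}
      ≤ pbdExpect ps fun k => exp (-(s * t)) * exp (s * σ * ((k : ℝ) - ps.sum)) :=
        pbdProb_le_pbdExpect hps (fun k => by positivity) hweight
    _ = exp (-(s * t)) * pbdExpect ps fun k => exp (s * σ * ((k : ℝ) - ps.sum)) :=
        pbdExpect_const_mul _ _ _
    _ ≤ exp (-(s * t)) * exp (3 / 4 * (s * σ) ^ 2 * (ps.map fun p => p * (1 - p)).sum) := by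
        gcongr
        exact pbdExpect_exp_le hps (by rw [abs_mul, hσ, abs_of_nonneg hs0, mul_one]; exact hs1)
    _ = exp (-(s * t) + 3 / 4 * s ^ 2 * (ps.map fun p => p * (1 - p)).sum) := by
        rw [← exp_add, mul_pow, ← sq_abs σ, hσ, one_pow, mul_one]

theorem pbdProb_tail_lt_exp_neg {ps : List ℝ} (hps : ∀ p ∈ ps, p ∈ Set.Icc (0 : ℝ) 1) {σ : ℝ}
    (hσ : |σ| = 1) {L : ℝ} (hL : 0 < L) (hLV : L ≤ (ps.map fun p => p * (1 - p)).sum) :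
    pbdProb ps {k | 2 * √L * √(ps.map fun p => p * (1 - p)).sum < σ * ((k : ℝ) - ps.sum)}
      < exp (-L) := by
  set V := (ps.map fun p => p * (1 - p)).sum
  have hsqrtL : 0 < √L := sqrt_pos.2 hL
  have hsqrtV : 0 < √V := sqrt_pos.2 (hL.trans_le hLV)
  have hs1 : √L / √V ≤ 1 := (div_le_one hsqrtV).2 (sqrt_le_sqrt hLV)
  have hexponent : -(√L / √V * (2 * √L * √V)) + 3 / 4 * (√L / √V) ^ 2 * V = -(5 / 4 * L) := by
    field_simp
    rw [sq_sqrt hL.le, sq_sqrt (hL.trans_le hLV).le]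
    ring
  calc _ ≤ exp (-(√L / √V * (2 * √L * √V)) + 3 / 4 * (√L / √V) ^ 2 * V) :=
        pbdProb_tail_le hps hσ _ (by positivity) hs1
    _ < exp (-L) := by rw [hexponent]; exact exp_lt_exp.2 (by linarith)

theorem pbdExpect_sub_pbdExpect_le_tvDist (ps qs : List ℝ) {w : ℕ → ℝ} (hw0 : ∀ k, 0 ≤ w k)
    (hw1 : ∀ k, w k ≤ 1) : pbdExpect ps w - pbdExpect qs w ≤ tvDist (pbd ps) (pbd qs) := by
  set N := max ps.length qs.length + 1
  have hpN : ps.length < N := by omega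
  have hqN : qs.length < N := by omega
  have htv : tvDist (pbd ps) (pbd qs) = 1 / 2 * ∑ k ∈ range N, |pbd ps k - pbd qs k| := by
    rw [tvDist, tsum_eq_sum fun k hk => ?_]
    have hk : N ≤ k := by simpa using hk
    rw [pbd_eq_zero_of_length_lt (by omega), pbd_eq_zero_of_length_lt (by omega), sub_zero,
      abs_zero]
  -- `2 w - 1` takes values in `[-1, 1]`, and both distributions have total mass `1`.
  have hpoint : ∀ k ∈ range N,
      (2 * w k - 1) * pbd ps k - (2 * w k - 1) * pbd qs k ≤ |pbd ps k - pbd qs k| := by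
    intro k _
    rw [← mul_sub]
    refine (le_abs_self _).trans ?_
    rw [abs_mul]
    exact mul_le_of_le_one_left (abs_nonneg _)
      (abs_le.2 ⟨by linarith [hw0 k], by linarith [hw1 k]⟩)
  have hsum := sum_le_sum hpoint
  rw [sum_sub_distrib, sum_range_mul_pbd hpN, sum_range_mul_pbd hqN, pbdExpect_sub,
    pbdExpect_sub, pbdExpect_const_mul, pbdExpect_const_mul, pbdExpect_const,
    pbdExpect_const] at hsum
  rw [htv]
  linarith

theorem one_sub_two_mul_exp_neg_lt_tvDist {ps qs : List ℝ}
    (hps : ∀ p ∈ ps, p ∈ Set.Icc (0 : ℝ) 1) (hqs : ∀ q ∈ qs, q ∈ Set.Icc (0 : ℝ) 1)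
    {L : ℝ} (hL : 0 < L) (hLX : L ≤ (ps.map fun p => p * (1 - p)).sum)
    (hLY : L ≤ (qs.map fun q => q * (1 - q)).sum) {σ : ℝ} (hσ : |σ| = 1)
    (hfar : 2 * √L * √(ps.map fun p => p * (1 - p)).sum
      + 2 * √L * √(qs.map fun q => q * (1 - q)).sum < σ * (qs.sum - ps.sum)) :
    1 - 2 * exp (-L) < tvDist (pbd ps) (pbd qs) := by
  set A := {k : ℕ | 2 * √L * √(ps.map fun p => p * (1 - p)).sum < σ * ((k : ℝ) - ps.sum)}ᶜ
  have hX : 1 - exp (-L) < pbdProb ps A := by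
    rw [pbdProb_compl]
    linarith [pbdProb_tail_lt_exp_neg hps hσ hL hLX]
  have hsub :
      A ⊆ {k | 2 * √L * √(qs.map fun q => q * (1 - q)).sum < -σ * ((k : ℝ) - qs.sum)} := by
    intro k hk
    simp only [A, Set.mem_compl_iff, Set.mem_ofPred_eq, not_lt] at hk ⊢
    linarith
  have hY : pbdProb qs A < exp (-L) :=
    (pbdProb_mono hqs hsub).trans_lt (pbdProb_tail_lt_exp_neg hqs (by rwa [abs_neg]) hL hLY)
  calc 1 - 2 * exp (-L) < pbdProb ps A - pbdProb qs A := by linarith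
    _ ≤ tvDist (pbd ps) (pbd qs) :=
      pbdExpect_sub_pbdExpect_le_tvDist ps qs (Set.indicator_nonneg fun _ _ => zero_le_one)
        fun k => by by_cases hk : k ∈ A <;> simp [hk]

/-- Let `X`, `Y` be PBDs with means `μ_X, μ_Y`, variances `σ_X², σ_Y²`. For any
    `ε ∈ (0,1)` with `σ_X², σ_Y² ≥ ln(2/(1-ε))`, if
    `|μ_Y - μ_X| > 2√(ln(2/(1-ε)))(σ_X + σ_Y)` then `d_TV(X,Y) > ε`. -/
theorem pbd_tvd_lower_bound (ps qs : List ℝ)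
    (hps : ∀ p ∈ ps, p ∈ Set.Icc (0 : ℝ) 1) (hqs : ∀ q ∈ qs, q ∈ Set.Icc (0 : ℝ) 1)
    (ε : ℝ) (hε0 : 0 < ε) (hε1 : ε < 1)
    (μX μY σX σY : ℝ)
    (hμX : μX = pmfMean (pbd ps)) (hμY : μY = pmfMean (pbd qs))
    (hσX : σX = Real.sqrt (pmfVar (pbd ps))) (hσY : σY = Real.sqrt (pmfVar (pbd qs)))
    (hvarX : Real.log (2 / (1 - ε)) ≤ σX ^ 2)
    (hvarY : Real.log (2 / (1 - ε)) ≤ σY ^ 2)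
    (hmeans : 2 * Real.sqrt (Real.log (2 / (1 - ε))) * (σX + σY) < |μY - μX|) :
    ε < tvDist (pbd ps) (pbd qs) := by
  set L := log (2 / (1 - ε))
  have hL : 0 < L := log_pos ((one_lt_div (by linarith)).2 (by linarith))
  have hexpL : exp (-L) = (1 - ε) / 2 := by
    rw [exp_neg, exp_log (div_pos two_pos (by linarith)), inv_div]
  rw [hσX, sq_sqrt (pmfVar_nonneg (pbd_nonneg hps)), pmfVar_pbd] at hvarX
  rw [hσY, sq_sqrt (pmfVar_nonneg (pbd_nonneg hqs)), pmfVar_pbd] at hvarY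
  rw [hμX, hμY, hσX, hσY, pmfMean_pbd, pmfMean_pbd, pmfVar_pbd, pmfVar_pbd] at hmeans
  obtain ⟨σ, hσ, hσabs⟩ : ∃ σ : ℝ, |σ| = 1 ∧ σ * (qs.sum - ps.sum) = |qs.sum - ps.sum| := by
    rcases abs_cases (qs.sum - ps.sum) with ⟨h, _⟩ | ⟨h, _⟩
    · exact ⟨1, abs_one, by rw [h, one_mul]⟩
    · exact ⟨-1, by rw [abs_neg, abs_one], by rw [h, neg_one_mul]⟩
  have h := one_sub_two_mul_exp_neg_lt_tvDist hps hqs hL hvarX hvarY hσ (by linarith)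
  rw [hexpL] at h
  linarith
end

section
/- Let p ∈ (0,1), let ε < 1/2 and n ≥ 1, and let q ∈ (0,1) satisfy |p − q| ≤ ε·√(p(1−p)/n). Then the total variation distance between the binomial distributions B(n,q) and B(n,p) is at most 2√e·ε. -/
/-- The mass function of the binomial distribution `B(n,p)`. -/
noncomputable def binomPMF (n : ℕ) (p : ℝ) (k : ℕ) : ℝ :=
  (n.choose k : ℝ) * p ^ k * (1 - p) ^ (n - k)

/-!
Let `ρ = √(pq) + √((1-p)(1-q))` be the Bhattacharyya coefficient of the Bernoulli laws with
parameters `p` and `q`; by the binomial theorem that of `B(n,p)` and `B(n,q)` is `ρⁿ`.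
Writing `|f - g| = |√f - √g| (√f + √g)` and applying Cauchy–Schwarz bounds the squared total
variation distance of two distributions by one minus their squared Bhattacharyya coefficient,
so `d_TV² ≤ 1 - ρ²ⁿ ≤ 2n(1 - ρ)` by Bernoulli's inequality. Finally
`2(1 - ρ) ≤ (p - q)² / (q(1 - q))`, and the closeness hypothesis turns the resulting bound into
`d_TV ≤ ε`.
-/

open Finset Real

noncomputable def bhattacharyyaCoeff {ι : Type*} (s : Finset ι) (f g : ι → ℝ) : ℝ :=
  ∑ i ∈ s, √(f i * g i)

section Hellinger

variable {ι : Type*} {s : Finset ι} {f g : ι → ℝ}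

theorem sum_sq_sqrt_sub_sqrt (hf : ∀ i ∈ s, 0 ≤ f i) (hg : ∀ i ∈ s, 0 ≤ g i)
    (hf1 : ∑ i ∈ s, f i = 1) (hg1 : ∑ i ∈ s, g i = 1) :
    ∑ i ∈ s, (√(f i) - √(g i)) ^ 2 = 2 - 2 * bhattacharyyaCoeff s f g := by
  have h : ∀ i ∈ s, (√(f i) - √(g i)) ^ 2 = f i + g i - 2 * √(f i * g i) := fun i hi => by
    rw [sub_sq, sq_sqrt (hf i hi), sq_sqrt (hg i hi), sqrt_mul (hf i hi)]; ring
  rw [sum_congr rfl h, sum_sub_distrib, sum_add_distrib, ← mul_sum, hf1, hg1,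
    bhattacharyyaCoeff]
  ring

theorem sum_sq_sqrt_add_sqrt (hf : ∀ i ∈ s, 0 ≤ f i) (hg : ∀ i ∈ s, 0 ≤ g i)
    (hf1 : ∑ i ∈ s, f i = 1) (hg1 : ∑ i ∈ s, g i = 1) :
    ∑ i ∈ s, (√(f i) + √(g i)) ^ 2 = 2 + 2 * bhattacharyyaCoeff s f g := by
  have h : ∀ i ∈ s, (√(f i) + √(g i)) ^ 2 = f i + g i + 2 * √(f i * g i) := fun i hi => by
    rw [add_sq, sq_sqrt (hf i hi), sq_sqrt (hg i hi), sqrt_mul (hf i hi)]; ring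
  rw [sum_congr rfl h, sum_add_distrib, sum_add_distrib, ← mul_sum, hf1, hg1,
    bhattacharyyaCoeff]
  ring

theorem sq_sum_abs_sub_le_bhattacharyyaCoeff (hf : ∀ i ∈ s, 0 ≤ f i) (hg : ∀ i ∈ s, 0 ≤ g i)
    (hf1 : ∑ i ∈ s, f i = 1) (hg1 : ∑ i ∈ s, g i = 1) :
    (∑ i ∈ s, |f i - g i|) ^ 2 ≤ 4 * (1 - bhattacharyyaCoeff s f g ^ 2) := by
  have hfactor : ∀ i ∈ s, |f i - g i| ^ 2 ≤ (√(f i) - √(g i)) ^ 2 * (√(f i) + √(g i)) ^ 2 :=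
    fun i hi => by
      rw [sq_abs, ← mul_pow, mul_comm, ← sq_sub_sq, sq_sqrt (hf i hi), sq_sqrt (hg i hi)]
  calc (∑ i ∈ s, |f i - g i|) ^ 2
      ≤ (∑ i ∈ s, (√(f i) - √(g i)) ^ 2) * ∑ i ∈ s, (√(f i) + √(g i)) ^ 2 :=
        sum_sq_le_sum_mul_sum_of_sq_le_mul s (fun _ _ => sq_nonneg _) (fun _ _ => sq_nonneg _)
          hfactor
    _ = 4 * (1 - bhattacharyyaCoeff s f g ^ 2) := by
        rw [sum_sq_sqrt_sub_sqrt hf hg hf1 hg1, sum_sq_sqrt_add_sqrt hf hg hf1 hg1]; ring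

end Hellinger

theorem tvDist_eq_sum_of_eq_zero {f g : ℕ → ℝ} (s : Finset ℕ) (hf : ∀ k ∉ s, f k = 0)
    (hg : ∀ k ∉ s, g k = 0) : tvDist f g = 1 / 2 * ∑ k ∈ s, |f k - g k| := by
  rw [tvDist, tsum_eq_sum fun k hk => by rw [hf k hk, hg k hk, sub_zero, abs_zero]]

theorem tvDist_sq_le_one_sub_bhattacharyyaCoeff_sq {f g : ℕ → ℝ} (s : Finset ℕ)
    (hf : ∀ k, 0 ≤ f k) (hg : ∀ k, 0 ≤ g k)
    (hf0 : ∀ k ∉ s, f k = 0) (hg0 : ∀ k ∉ s, g k = 0)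
    (hf1 : ∑ k ∈ s, f k = 1) (hg1 : ∑ k ∈ s, g k = 1) :
    tvDist f g ^ 2 ≤ 1 - bhattacharyyaCoeff s f g ^ 2 := by
  have h := sq_sum_abs_sub_le_bhattacharyyaCoeff (fun k _ => hf k) (fun k _ => hg k) hf1 hg1
  rw [tvDist_eq_sum_of_eq_zero s hf0 hg0]
  linarith

theorem binomPMF_nonneg {n : ℕ} {p : ℝ} (hp : p ∈ Set.Icc 0 1) (k : ℕ) :
    0 ≤ binomPMF n p k := by
  have hp' : 0 ≤ 1 - p := sub_nonneg.2 hp.2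
  have hp0 : 0 ≤ p := hp.1
  unfold binomPMF
  positivity

theorem binomPMF_eq_zero_of_lt {n k : ℕ} (p : ℝ) (h : n < k) : binomPMF n p k = 0 := by
  rw [binomPMF, Nat.choose_eq_zero_of_lt h, Nat.cast_zero, zero_mul, zero_mul]

theorem sum_binomPMF (n : ℕ) (p : ℝ) : ∑ k ∈ range (n + 1), binomPMF n p k = 1 := by
  have h := (add_pow p (1 - p) n).symm
  rw [add_sub_cancel, one_pow] at h
  rw [← h]
  exact sum_congr rfl fun k _ => by rw [binomPMF]; ring

theorem bhattacharyyaCoeff_binomPMF {n : ℕ} {p q : ℝ} (hp : p ∈ Set.Icc 0 1)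
    (hq : q ∈ Set.Icc 0 1) :
    bhattacharyyaCoeff (range (n + 1)) (binomPMF n p) (binomPMF n q) =
      (√(p * q) + √((1 - p) * (1 - q))) ^ n := by
  have hpow : ∀ x : ℝ, 0 ≤ x → ∀ m : ℕ, (√x ^ m) ^ 2 = x ^ m := fun x hx m => by
    rw [pow_right_comm, sq_sqrt hx]
  have hp' : 0 ≤ (1 - p) * (1 - q) := mul_nonneg (sub_nonneg.2 hp.2) (sub_nonneg.2 hq.2)
  rw [bhattacharyyaCoeff, add_pow]
  refine sum_congr rfl fun k _ => ?_
  have hsq : binomPMF n p k * binomPMF n q k =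
      (√(p * q) ^ k * √((1 - p) * (1 - q)) ^ (n - k) * n.choose k) ^ 2 := by
    rw [mul_pow, mul_pow, hpow _ (mul_nonneg hp.1 hq.1), hpow _ hp', mul_pow p, mul_pow (1 - p),
      binomPMF, binomPMF]
    ring
  rw [hsq, sqrt_sq (by positivity)]

theorem mul_sq_sqrt_sub_sqrt_le {x y : ℝ} (hx : 0 ≤ x) (hy : 0 ≤ y) :
    x * (√x - √y) ^ 2 ≤ (x - y) ^ 2 := by
  have hxy : (x - y) ^ 2 = (√x - √y) ^ 2 * (√x + √y) ^ 2 := by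
    rw [← mul_pow, mul_comm, ← sq_sub_sq, sq_sqrt hx, sq_sqrt hy]
  have hx_le : x ≤ (√x + √y) ^ 2 := by
    nlinarith [sq_sqrt hx, sqrt_nonneg x, sqrt_nonneg y]
  rw [hxy, mul_comm]
  exact mul_le_mul_of_nonneg_left hx_le (sq_nonneg _)

/-- `2 (1 - ρ) = (√p - √q)² + (√(1-p) - √(1-q))²`, and each square is controlled by
`mul_sq_sqrt_sub_sqrt_le`. -/
theorem mul_one_sub_bhattacharyya_bernoulli_le {p q : ℝ} (hp : p ∈ Set.Icc 0 1)
    (hq : q ∈ Set.Icc 0 1) :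
    q * (1 - q) * (2 * (1 - (√(p * q) + √((1 - p) * (1 - q))))) ≤ (p - q) ^ 2 := by
  have hp' : 0 ≤ 1 - p := sub_nonneg.2 hp.2
  have hq' : 0 ≤ 1 - q := sub_nonneg.2 hq.2
  have hsqrt := mul_sq_sqrt_sub_sqrt_le hq.1 hp.1
  have hsqrt_one_sub := mul_sq_sqrt_sub_sqrt_le hq' hp'
  have hρ : 2 * (1 - (√(p * q) + √((1 - p) * (1 - q)))) =
      (√q - √p) ^ 2 + (√(1 - q) - √(1 - p)) ^ 2 := by
    rw [sqrt_mul hp.1, sqrt_mul hp']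
    linear_combination -(sq_sqrt hp.1) - sq_sqrt hq.1 - sq_sqrt hp' - sq_sqrt hq'
  rw [hρ]
  nlinarith [mul_le_mul_of_nonneg_left hsqrt hq', mul_le_mul_of_nonneg_left hsqrt_one_sub hq.1]

theorem one_sub_pow_le_mul_one_sub {x : ℝ} (hx : -1 ≤ x) (m : ℕ) : 1 - x ^ m ≤ m * (1 - x) := by
  linarith [one_add_mul_sub_le_pow hx m]

theorem tvDist_binomPMF_sq_le {n : ℕ} {p q : ℝ} (hp : p ∈ Set.Icc 0 1) (hq : q ∈ Set.Ioo 0 1) :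
    tvDist (binomPMF n p) (binomPMF n q) ^ 2 ≤ n * (p - q) ^ 2 / (q * (1 - q)) := by
  have hq' : q ∈ Set.Icc 0 1 := Set.Ioo_subset_Icc_self hq
  set ρ := √(p * q) + √((1 - p) * (1 - q))
  have hρ : -1 ≤ ρ := by linarith [sqrt_nonneg (p * q), sqrt_nonneg ((1 - p) * (1 - q))]
  have hhellinger : tvDist (binomPMF n p) (binomPMF n q) ^ 2 ≤ 1 - ρ ^ (n * 2) := by
    have h := tvDist_sq_le_one_sub_bhattacharyyaCoeff_sq (range (n + 1))
      (binomPMF_nonneg hp) (binomPMF_nonneg hq')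
      (fun _ hk => binomPMF_eq_zero_of_lt p (by simpa using hk))
      (fun _ hk => binomPMF_eq_zero_of_lt q (by simpa using hk))
      (sum_binomPMF n p) (sum_binomPMF n q)
    rwa [bhattacharyyaCoeff_binomPMF hp hq', ← pow_mul] at h
  have hbernoulli : 1 - ρ ^ (n * 2) ≤ n * (2 * (1 - ρ)) := by
    have h := one_sub_pow_le_mul_one_sub hρ (n * 2)
    push_cast at h
    linarith
  have hq_pos : 0 < q * (1 - q) := mul_pos hq.1 (sub_pos.2 hq.2)
  rw [le_div_iff₀ hq_pos]
  calc tvDist (binomPMF n p) (binomPMF n q) ^ 2 * (q * (1 - q))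
      ≤ n * (2 * (1 - ρ)) * (q * (1 - q)) := by gcongr; exact hhellinger.trans hbernoulli
    _ = n * (q * (1 - q) * (2 * (1 - ρ))) := by ring
    _ ≤ n * (p - q) ^ 2 := by
        gcongr
        exact mul_one_sub_bhattacharyya_bernoulli_le hp hq'

theorem binomial_tvd_of_close_params_general (n : ℕ) (p q ε : ℝ)
    (hp : p ∈ Set.Ioo (0 : ℝ) 1) (hq : q ∈ Set.Ioo (0 : ℝ) 1)
    (hε0 : 0 < ε)
    (hclose : |p - q| ≤ ε * Real.sqrt (p * (1 - p) / n)) :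
    tvDist (binomPMF n q) (binomPMF n p) ≤ 2 * Real.sqrt (Real.exp 1) * ε := by
  have hp_pos : 0 < p * (1 - p) := mul_pos hp.1 (sub_pos.2 hp.2)
  have hclose_sq : n * (q - p) ^ 2 ≤ ε ^ 2 * (p * (1 - p)) := by
    have h := pow_le_pow_left₀ (abs_nonneg _) hclose 2
    rw [sq_abs, mul_pow, sq_sqrt (by positivity), sub_sq_comm] at h
    rcases n.eq_zero_or_pos with rfl | hn
    · rw [Nat.cast_zero, zero_mul]
      positivity
    · calc n * (q - p) ^ 2 ≤ n * (ε ^ 2 * (p * (1 - p) / n)) := by gcongr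
        _ = ε ^ 2 * (p * (1 - p)) := by field_simp
  have htv : tvDist (binomPMF n q) (binomPMF n p) ≤ ε := by
    refine le_of_sq_le_sq ?_ hε0.le
    calc tvDist (binomPMF n q) (binomPMF n p) ^ 2 ≤ n * (q - p) ^ 2 / (p * (1 - p)) :=
          tvDist_binomPMF_sq_le (Set.Ioo_subset_Icc_self hq) hp
      _ ≤ ε ^ 2 := (div_le_iff₀ hp_pos).2 hclose_sq
  have hsqrt_exp : 1 ≤ Real.sqrt (Real.exp 1) := one_le_sqrt.2 (one_le_exp zero_le_one)
  calc tvDist (binomPMF n q) (binomPMF n p) ≤ ε := htv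
    _ ≤ 2 * Real.sqrt (Real.exp 1) * ε := le_mul_of_one_le_left hε0.le (by linarith)

/-- If `p ∈ (0,1)`, `0 < ε < 1/2`, `n ≥ 1` and `q ∈ (0,1)` satisfies
    `|p - q| ≤ ε √(p(1-p)/n)`, then `d_TV(B(n,q), B(n,p)) ≤ 2√e·ε`. -/
theorem binomial_tvd_of_close_params (n : ℕ) (hn : 1 ≤ n) (p q ε : ℝ)
    (hp : p ∈ Set.Ioo (0 : ℝ) 1) (hq : q ∈ Set.Ioo (0 : ℝ) 1)
    (hε0 : 0 < ε) (hε : ε < 1 / 2)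
    (hclose : |p - q| ≤ ε * Real.sqrt (p * (1 - p) / n)) :
    tvDist (binomPMF n q) (binomPMF n p) ≤ 2 * Real.sqrt (Real.exp 1) * ε :=
  binomial_tvd_of_close_params_general n p q ε hp hq hε0 hclose
end

section
/- Let D = √(e^C − 1)/C where C = 2 + W(−2/e²) (W the principal branch of the Lambert W function), and define ψ(p) = D·√(p/(1−p))·ln(1/p). Let p, q₁, q₂ ∈ (0,1) with q₁ < p < q₂, and let err(n,p,ε) = ε·√(p(1−p)/n). If p − q₁ ≤ ψ(p)·err(n,p,ε) and q₂ − p ≤ ψ(p)·err(n,p,ε), then for all real l ∈ (1,∞) we have p^l − q₁^l ≤ err(n, p^l, ε), and for all real l ∈ (0,1) we have q₂^l − p^l ≤ err(n, p^l, ε). -/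
/-!
Substituting `t = e^{-s}`, the inequality `D · t log(1/t) ≤ √(t(1-t))` on `(0,1)` becomes
`D² ≤ (e^s - 1)/s²` for `s > 0`, and `D² = (e^C - 1)/C²` is exactly the minimum of that
function. Convexity of `x ↦ x^l` for `l > 1` (concavity for `l < 1`) bounds `p^l - q₁^l` and
`q₂^l - p^l` by the tangent slope `l p^(l-1)` times `p - q₁` resp. `q₂ - p`, and at `t = p^l`
that slope times `ψ(p) err(n,p,ε)` equals `ε/√n · D t log(1/t)`,
while `err(n,t,ε) = ε/√n · √(t(1-t))`.
-/

/-- The error scale `err(n,p,ε) = ε √(p(1-p)/n)`. -/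
noncomputable def errScale (n : ℕ) (p ε : ℝ) : ℝ := ε * Real.sqrt (p * (1 - p) / n)

open Real Set

lemma hasDerivAt_two_sub_mul_exp (s : ℝ) :
    HasDerivAt (fun s => (2 - s) * exp s) ((1 - s) * exp s) s := by
  refine (((hasDerivAt_id s).const_sub 2).fun_mul (hasDerivAt_exp s)).congr_deriv ?_
  simp only [id]
  ring

lemma strictMonoOn_two_sub_mul_exp : StrictMonoOn (fun s => (2 - s) * exp s) (Iic 1) := by
  refine strictMonoOn_of_deriv_pos (convex_Iic 1) (by fun_prop) fun s hs => ?_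
  rw [interior_Iic, mem_Iio] at hs
  rw [(hasDerivAt_two_sub_mul_exp s).deriv]
  exact mul_pos (by linarith) (exp_pos s)

lemma strictAntiOn_two_sub_mul_exp : StrictAntiOn (fun s => (2 - s) * exp s) (Ici 1) := by
  refine strictAntiOn_of_deriv_neg (convex_Ici 1) (by fun_prop) fun s hs => ?_
  rw [interior_Ici, mem_Ioi] at hs
  rw [(hasDerivAt_two_sub_mul_exp s).deriv]
  exact mul_neg_of_neg_of_pos (by linarith) (exp_pos s)

lemma hasDerivAt_exp_sub_one_div_sq {s : ℝ} (hs : s ≠ 0) :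
    HasDerivAt (fun s => (exp s - 1) / s ^ 2) ((2 - (2 - s) * exp s) / s ^ 3) s := by
  refine (((hasDerivAt_exp s).sub_const 1).fun_div (hasDerivAt_pow 2 s)
    (pow_ne_zero 2 hs)).congr_deriv ?_
  field_simp
  ring

lemma isMinOn_Ioi_of_hasDerivAt {f f' : ℝ → ℝ} {a c : ℝ} (hac : a < c)
    (hf : ∀ x ∈ Ioi a, HasDerivAt f (f' x) x) (hle : ∀ x ∈ Ioo a c, f' x ≤ 0)
    (hge : ∀ x ∈ Ioi c, 0 ≤ f' x) : IsMinOn f (Ioi a) c := by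
  have hcont : ContinuousOn f (Ioi a) := fun x hx => (hf x hx).continuousAt.continuousWithinAt
  intro x hx
  rcases le_total x c with hxc | hcx
  · refine antitoneOn_of_hasDerivWithinAt_nonpos (f' := f') (convex_Ioc a c)
      (hcont.mono Ioc_subset_Ioi_self) (fun y hy => ?_) (fun y hy => ?_)
      ⟨hx, hxc⟩ ⟨hac, le_rfl⟩ hxc
    all_goals rw [interior_Ioc] at hy
    · exact (hf y hy.1).hasDerivWithinAt
    · exact hle y hy
  · refine monotoneOn_of_hasDerivWithinAt_nonneg (f' := f') (convex_Ici c)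
      (hcont.mono (Ici_subset_Ioi.2 hac)) (fun y hy => ?_) (fun y hy => ?_)
      self_mem_Ici hcx hcx
    all_goals rw [interior_Ici] at hy
    · exact (hf y (hac.trans hy)).hasDerivWithinAt
    · exact hge y hy

section CriticalPoint

variable {C : ℝ} (hC : (C - 2) * exp C = -2) (hC0 : 0 < C)
include hC hC0

lemma one_lt_of_sub_two_mul_exp_eq : 1 < C := by
  by_contra! hC1
  have := strictMonoOn_two_sub_mul_exp (mem_Iic.2 zero_le_one) (mem_Iic.2 hC1) hC0
  simp only [sub_zero, exp_zero, mul_one] at this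
  linarith

lemma two_le_two_sub_mul_exp_of_le {s : ℝ} (hs0 : 0 ≤ s) (hsC : s ≤ C) :
    2 ≤ (2 - s) * exp s := by
  rcases le_total s 1 with hs1 | hs1
  · simpa using
      strictMonoOn_two_sub_mul_exp.monotoneOn (mem_Iic.2 zero_le_one) (mem_Iic.2 hs1) hs0
  · have := strictAntiOn_two_sub_mul_exp.antitoneOn (mem_Ici.2 hs1)
      (mem_Ici.2 (one_lt_of_sub_two_mul_exp_eq hC hC0).le) hsC
    linarith

lemma two_sub_mul_exp_le_two_of_le {s : ℝ} (hCs : C ≤ s) : (2 - s) * exp s ≤ 2 := by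
  have hC1 := one_lt_of_sub_two_mul_exp_eq hC hC0
  have := strictAntiOn_two_sub_mul_exp.antitoneOn (mem_Ici.2 hC1.le)
    (mem_Ici.2 (hC1.le.trans hCs)) hCs
  linarith

/-- `(2 - C) e^C = 2` says that `C` is the critical point of `(e^s - 1)/s²` on `s > 0`. -/
theorem isMinOn_exp_sub_one_div_sq : IsMinOn (fun s => (exp s - 1) / s ^ 2) (Ioi 0) C := by
  refine isMinOn_Ioi_of_hasDerivAt hC0 (fun s hs => hasDerivAt_exp_sub_one_div_sq hs.ne')
    (fun s hs => ?_) (fun s hs => ?_)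
  · have := two_le_two_sub_mul_exp_of_le hC hC0 hs.1.le hs.2.le
    exact div_nonpos_of_nonpos_of_nonneg (by linarith) (pow_pos hs.1 3).le
  · have := two_sub_mul_exp_le_two_of_le hC hC0 (mem_Ioi.1 hs).le
    exact div_nonneg (by linarith) (pow_pos (hC0.trans hs) 3).le

theorem sqrt_exp_sub_one_div_mul_mul_log_le {t : ℝ} (ht0 : 0 < t) (ht1 : t < 1) :
    √(exp C - 1) / C * (t * log (1 / t)) ≤ √(t * (1 - t)) := by
  set s := log (1 / t)
  have hs0 : 0 < s := log_pos ((one_lt_div ht0).2 ht1)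
  have hexp : exp s = 1 / t := exp_log (by positivity)
  have hmin : (exp C - 1) / C ^ 2 ≤ (exp s - 1) / s ^ 2 :=
    isMinOn_exp_sub_one_div_sq hC hC0 (mem_Ioi.2 hs0)
  have hexpC : 1 ≤ exp C := one_le_exp hC0.le
  rw [le_div_iff₀ (by positivity)] at hmin
  rw [le_sqrt (by positivity) (by nlinarith), mul_pow, div_pow, sq_sqrt (by linarith)]
  calc (exp C - 1) / C ^ 2 * (t * s) ^ 2 = (exp C - 1) / C ^ 2 * s ^ 2 * t ^ 2 := by ring
    _ ≤ (exp s - 1) * t ^ 2 := by gcongr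
    _ = t * (1 - t) := by rw [hexp]; field_simp

end CriticalPoint

lemma errScale_eq (n : ℕ) (p ε : ℝ) : errScale n p ε = ε / √n * √(p * (1 - p)) := by
  rw [errScale, sqrt_div' _ (Nat.cast_nonneg n)]
  ring

lemma mul_rpow_sub_one_mul_errScale (n : ℕ) (ε D l : ℝ) {p : ℝ} (hp0 : 0 < p) (hp1 : p < 1) :
    l * p ^ (l - 1) * (D * √(p / (1 - p)) * log (1 / p) * errScale n p ε) =
      ε / √n * (D * (p ^ l * log (1 / p ^ l))) := by
  have h1p : 0 < 1 - p := by linarith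
  have hsqrt : √(p / (1 - p)) * √(p * (1 - p)) = p := by
    rw [← sqrt_mul (by positivity), show p / (1 - p) * (p * (1 - p)) = p ^ 2 by field_simp,
      sqrt_sq hp0.le]
  rw [errScale_eq, one_div, one_div, log_inv, log_inv, log_rpow hp0, rpow_sub_one hp0.ne']
  field_simp
  linear_combination -(l * D * log p * ε / √n) * hsqrt

section Tangent

variable {p q l : ℝ}

lemma rpow_add_mul_rpow_sub_one_mul_sub_eq (hp : 0 < p) :
    p ^ l + l * p ^ (l - 1) * (q - p) = (1 + l * (q / p - 1)) * p ^ l := by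
  rw [rpow_sub_one hp.ne']
  field_simp

lemma neg_one_le_div_sub_one (hp : 0 < p) (hq : 0 ≤ q) : -1 ≤ q / p - 1 := by
  linarith [div_nonneg hq hp.le]

/-- Bernoulli's inequality rescaled by `p`: the tangent line of the convex `x ↦ x ^ l` at `p`. -/
lemma rpow_add_mul_rpow_sub_one_mul_sub_le (hp : 0 < p) (hq : 0 ≤ q) (hl : 1 ≤ l) :
    p ^ l + l * p ^ (l - 1) * (q - p) ≤ q ^ l := by
  have h := one_add_mul_self_le_rpow_one_add (neg_one_le_div_sub_one hp hq) hl
  rwa [add_sub_cancel, div_rpow hq hp.le, le_div_iff₀ (rpow_pos_of_pos hp l),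
    ← rpow_add_mul_rpow_sub_one_mul_sub_eq hp] at h

lemma rpow_le_rpow_add_mul_rpow_sub_one_mul_sub (hp : 0 < p) (hq : 0 ≤ q) (hl0 : 0 ≤ l)
    (hl1 : l ≤ 1) : q ^ l ≤ p ^ l + l * p ^ (l - 1) * (q - p) := by
  have h := rpow_one_add_le_one_add_mul_self (neg_one_le_div_sub_one hp hq) hl0 hl1
  rwa [add_sub_cancel, div_rpow hq hp.le, div_le_iff₀ (rpow_pos_of_pos hp l),
    ← rpow_add_mul_rpow_sub_one_mul_sub_eq hp] at h

end Tangent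

theorem binomial_all_powers_general (n : ℕ) (ε : ℝ) (hε : 0 < ε)
    (C : ℝ) (hC : (C - 2) * Real.exp C = -2) (hC0 : 0 < C)
    (D : ℝ) (hD : D = Real.sqrt (Real.exp C - 1) / C)
    (ψ : ℝ → ℝ) (hψ : ∀ p : ℝ, ψ p = D * Real.sqrt (p / (1 - p)) * Real.log (1 / p))
    (p q₁ q₂ : ℝ) (hp0 : 0 < p) (hp1 : p < 1) (hq₁0 : 0 < q₁)
    (hpq₂ : p < q₂)
    (h₁ : p - q₁ ≤ ψ p * errScale n p ε) (h₂ : q₂ - p ≤ ψ p * errScale n p ε) :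
    (∀ l : ℝ, 1 < l → p ^ l - q₁ ^ l ≤ errScale n (p ^ l) ε) ∧
      (∀ l : ℝ, 0 < l → l < 1 → q₂ ^ l - p ^ l ≤ errScale n (p ^ l) ε) := by
  have hψ_err :
      ∀ l, 0 < l → l * p ^ (l - 1) * (ψ p * errScale n p ε) ≤ errScale n (p ^ l) ε := by
    intro l hl
    rw [hψ, mul_rpow_sub_one_mul_errScale n ε D l hp0 hp1, errScale_eq, hD]
    exact mul_le_mul_of_nonneg_left (sqrt_exp_sub_one_div_mul_mul_log_le hC hC0
      (rpow_pos_of_pos hp0 l) (rpow_lt_one hp0.le hp1 hl)) (by positivity)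
  refine ⟨fun l hl => ?_, fun l hl0 hl1 => ?_⟩
  · have hl0 : 0 < l := zero_lt_one.trans hl
    calc p ^ l - q₁ ^ l ≤ l * p ^ (l - 1) * (p - q₁) := by
          linarith [rpow_add_mul_rpow_sub_one_mul_sub_le hp0 hq₁0.le hl.le]
      _ ≤ l * p ^ (l - 1) * (ψ p * errScale n p ε) := by gcongr
      _ ≤ errScale n (p ^ l) ε := hψ_err l hl0
  · calc q₂ ^ l - p ^ l ≤ l * p ^ (l - 1) * (q₂ - p) := by
          have hq₂0 : 0 ≤ q₂ := (hp0.trans hpq₂).le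
          linarith [rpow_le_rpow_add_mul_rpow_sub_one_mul_sub hp0 hq₂0 hl0.le hl1.le]
      _ ≤ l * p ^ (l - 1) * (ψ p * errScale n p ε) := by gcongr
      _ ≤ errScale n (p ^ l) ε := hψ_err l hl0

/-- With `C = 2 + W(-2/e²)` (so `(C-2)e^C = -2`, `0 < C < 2`),
    `D = √(e^C - 1)/C` and `ψ(p) = D √(p/(1-p)) ln(1/p)`: if
    `p - q₁ ≤ ψ(p)·err(n,p,ε)` and `q₂ - p ≤ ψ(p)·err(n,p,ε)` with
    `q₁ < p < q₂` in `(0,1)`, then `p^l - q₁^l ≤ err(n,p^l,ε)` for all `l > 1`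
    and `q₂^l - p^l ≤ err(n,p^l,ε)` for all `l ∈ (0,1)`. -/
theorem binomial_all_powers (n : ℕ) (hn : 1 ≤ n) (ε : ℝ) (hε : 0 < ε)
    (C : ℝ) (hC : (C - 2) * Real.exp C = -2) (hC0 : 0 < C) (hC2 : C < 2)
    (D : ℝ) (hD : D = Real.sqrt (Real.exp C - 1) / C)
    (ψ : ℝ → ℝ) (hψ : ∀ p : ℝ, ψ p = D * Real.sqrt (p / (1 - p)) * Real.log (1 / p))
    (p q₁ q₂ : ℝ) (hp0 : 0 < p) (hp1 : p < 1) (hq₁0 : 0 < q₁) (hq₂1 : q₂ < 1)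
    (hq₁p : q₁ < p) (hpq₂ : p < q₂)
    (h₁ : p - q₁ ≤ ψ p * errScale n p ε) (h₂ : q₂ - p ≤ ψ p * errScale n p ε) :
    (∀ l : ℝ, 1 < l → p ^ l - q₁ ^ l ≤ errScale n (p ^ l) ε) ∧
      (∀ l : ℝ, 0 < l → l < 1 → q₂ ^ l - p ^ l ≤ errScale n (p ^ l) ε) :=
  binomial_all_powers_general n ε hε C hC hC0 D hD ψ hψ p q₁ q₂ hp0 hp1 hq₁0 hpq₂ h₁ h₂
end

section
/- For fixed p ∈ (0,1) and l > 0, the quantity g = 6 − 6·p^l + 4·l·ln(p) + l²·(ln p)² is strictly positive. -/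
/-!
Put `x = l log p < 0`, so that `p ^ l = exp x`. Squaring `1 - x / 2 < exp (-x / 2)` gives
`exp x * (2 - x) ^ 2 < 4`, and with this bound the claim reduces to the polynomial inequality
`t (t³ - 6 t + 8) > 0` for `t = -x > 0`, whose cubic factor has minimum `8 - 4 √2` on `t > 0`.
-/

open Real

lemma exp_mul_two_sub_sq_lt_four {x : ℝ} (hx0 : x ≠ 0) (hx2 : x < 2) :
    exp x * (2 - x) ^ 2 < 4 := by
  have hlt : 1 - x / 2 < exp (-(x / 2)) := one_sub_lt_exp_neg (by positivity)
  have hpos : 0 < (1 - x / 2) * exp (x / 2) := by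
    have : 0 < 1 - x / 2 := by linarith
    positivity
  have hlt_one : (1 - x / 2) * exp (x / 2) < 1 := by
    calc (1 - x / 2) * exp (x / 2) < exp (-(x / 2)) * exp (x / 2) := by gcongr
      _ = 1 := by rw [← exp_add, neg_add_cancel, exp_zero]
  calc exp x * (2 - x) ^ 2 = 4 * ((1 - x / 2) * exp (x / 2)) ^ 2 := by
        rw [mul_pow, ← exp_nat_mul]; push_cast; ring_nf
    _ < 4 * 1 ^ 2 := by gcongr
    _ = 4 := by norm_num

lemma six_sub_six_mul_exp_add_pos {x : ℝ} (hx : x < 0) :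
    0 < 6 - 6 * exp x + 4 * x + x ^ 2 := by
  have hexp := exp_mul_two_sub_sq_lt_four hx.ne (by linarith)
  have hcubic : 0 < -x ^ 3 + 6 * x + 8 := by nlinarith [sq_nonneg (x ^ 2 - 2)]
  have hsq : 0 < (2 - x) ^ 2 := by nlinarith
  have key : 0 < (6 - 6 * exp x + 4 * x + x ^ 2) * (2 - x) ^ 2 := by
    nlinarith [mul_pos (neg_pos.2 hx) hcubic]
  exact pos_of_mul_pos_left key hsq.le

/-- For `p ∈ (0,1)` and `l > 0`,
    `6 - 6 p^l + 4 l ln p + l² (ln p)² > 0`. -/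
theorem g_pos (p l : ℝ) (hp0 : 0 < p) (hp1 : p < 1) (hl : 0 < l) :
    0 < 6 - 6 * p ^ l + 4 * l * Real.log p + l ^ 2 * (Real.log p) ^ 2 := by
  have hx : l * log p < 0 := mul_neg_of_pos_of_neg hl (log_neg hp0 hp1)
  have hpow : p ^ l = exp (l * log p) := by rw [rpow_def_of_pos hp0, mul_comm]
  rw [hpow]
  convert six_sub_six_mul_exp_add_pos hx using 1
  ring
end

section
/- Let ε ∈ (0,1/6) and n ≥ 1 with 36ε² ≤ n. If p ∈ ((1 − √(1 − 36ε²/n))/2, (1 + √(1 − 36ε²/n))/2) and p̂ ∈ (0,1) satisfies |p − p̂| ≤ ε·√(p(1−p)/n), then (1/2)·ln(p) ≥ ln(p̂) ≥ (3/2)·ln(p), i.e., 1/2 ≤ ln(p̂)/ln(p) ≤ 3/2. -/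
/-!
Write `v = p (1 - p)`. The position of `p` inside the interval says `36 ε² / n < 4 v`, which
is exactly what makes the allowed deviation `ε √(v / n)` at most `v / 3`. With `s = √p`, the
window `p ± v / 3` lies inside `[s³, s]`, since `s³ - 4 s + 3 = (1 - s) (3 - s - s²) ≥ 0` and
`s² - 3 s + 2 = (1 - s) (2 - s) ≥ 0` on `[0, 1]`. So `p^(3/2) ≤ p̂ ≤ p^(1/2)`; taking
logarithms and dividing by `log p < 0` gives the claim.
-/

open Real

lemma one_sub_lt_four_mul_mul_one_sub {y p : ℝ} (hl : (1 - √y) / 2 < p)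
    (hu : p < (1 + √y) / 2) : 1 - y < 4 * (p * (1 - p)) := by
  have h : |2 * p - 1| < √y := abs_lt.mpr ⟨by linarith, by linarith⟩
  have h2 : (2 * p - 1) ^ 2 < y := by
    simpa only [sq_abs] using (Real.lt_sqrt (abs_nonneg _)).mp h
  linarith

lemma abs_le_div_three_of_le_mul_sqrt {d ε n v : ℝ} (hv : 0 ≤ v) (hn : 0 ≤ n)
    (hε : 9 * (ε ^ 2 / n) ≤ v) (h : |d| ≤ ε * √(v / n)) : |d| ≤ v / 3 := by
  have hsq : |d| ^ 2 ≤ (v / 3) ^ 2 :=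
    calc |d| ^ 2 ≤ (ε * √(v / n)) ^ 2 := pow_le_pow_left₀ (abs_nonneg d) h 2
      _ = ε ^ 2 / n * v := by rw [mul_pow, sq_sqrt (div_nonneg hv hn)]; ring
      _ ≤ v / 9 * v := mul_le_mul_of_nonneg_right (by linarith) hv
      _ = (v / 3) ^ 2 := by ring
  exact (sq_le_sq₀ (abs_nonneg d) (by positivity)).mp hsq

lemma mul_sqrt_le_sub_mul_one_sub_div_three {p : ℝ} (hp0 : 0 ≤ p) (hp1 : p ≤ 1) :
    p * √p ≤ p - p * (1 - p) / 3 := by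
  obtain ⟨s, hs0, rfl⟩ : ∃ s, 0 ≤ s ∧ s ^ 2 = p := ⟨√p, sqrt_nonneg p, sq_sqrt hp0⟩
  have hs1 : s ≤ 1 := (sq_le_one_iff₀ hs0).mp hp1
  rw [sqrt_sq hs0]
  nlinarith [mul_nonneg (sq_nonneg s)
    (mul_nonneg (sub_nonneg.mpr hs1) (by linarith : (0 : ℝ) ≤ 2 - s))]

lemma add_mul_one_sub_div_three_le_sqrt {p : ℝ} (hp0 : 0 ≤ p) (hp1 : p ≤ 1) :
    p + p * (1 - p) / 3 ≤ √p := by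
  obtain ⟨s, hs0, rfl⟩ : ∃ s, 0 ≤ s ∧ s ^ 2 = p := ⟨√p, sqrt_nonneg p, sq_sqrt hp0⟩
  have hs1 : s ≤ 1 := (sq_le_one_iff₀ hs0).mp hp1
  rw [sqrt_sq hs0]
  nlinarith [mul_nonneg hs0
    (mul_nonneg (sub_nonneg.mpr hs1) (by nlinarith : (0 : ℝ) ≤ 3 - s - s ^ 2))]

lemma log_bounds_of_abs_sub_le {p q : ℝ} (hp0 : 0 < p) (hp1 : p < 1)
    (h : |p - q| ≤ p * (1 - p) / 3) : 3 / 2 * log p ≤ log q ∧ log q ≤ log p / 2 := by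
  obtain ⟨hlo, hhi⟩ := abs_le.mp h
  have hsqrt : 0 < √p := sqrt_pos.mpr hp0
  have hq_lower : p * √p ≤ q := by
    linarith [mul_sqrt_le_sub_mul_one_sub_div_three hp0.le hp1.le]
  have hq_upper : q ≤ √p := by
    linarith [add_mul_one_sub_div_three_le_sqrt hp0.le hp1.le]
  have hq0 : 0 < q := (mul_pos hp0 hsqrt).trans_le hq_lower
  constructor
  · calc 3 / 2 * log p = log (p * √p) := by rw [log_mul hp0.ne' hsqrt.ne', log_sqrt hp0.le]; ring
      _ ≤ log q := log_le_log (mul_pos hp0 hsqrt) hq_lower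
  · calc log q ≤ log √p := log_le_log hq0 hq_upper
      _ = log p / 2 := log_sqrt hp0.le

theorem log_ratio_bounds_general (ε : ℝ) (n : ℕ) (p ph : ℝ)
    (hpl : (1 - Real.sqrt (1 - 36 * ε ^ 2 / n)) / 2 < p)
    (hpu : p < (1 + Real.sqrt (1 - 36 * ε ^ 2 / n)) / 2)
    (hclose : |p - ph| ≤ ε * Real.sqrt (p * (1 - p) / n)) :
    1/2 ≤ Real.log ph / Real.log p ∧ Real.log ph / Real.log p ≤ 3/2 := by
  have hvar : 36 * ε ^ 2 / n < 4 * (p * (1 - p)) := by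
    simpa only [sub_sub_cancel] using one_sub_lt_four_mul_mul_one_sub hpl hpu
  have hvar0 : 0 < p * (1 - p) := by
    have : (0 : ℝ) ≤ 36 * ε ^ 2 / n := by positivity
    linarith
  have hp0 : 0 < p := by nlinarith
  have hp1 : p < 1 := by nlinarith
  have hdev : |p - ph| ≤ p * (1 - p) / 3 :=
    abs_le_div_three_of_le_mul_sqrt hvar0.le n.cast_nonneg
      (by linarith [mul_div_assoc 36 (ε ^ 2) (n : ℝ)]) hclose
  obtain ⟨hlo, hhi⟩ := log_bounds_of_abs_sub_le hp0 hp1 hdev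
  have hlogp : log p < 0 := log_neg hp0 hp1
  constructor
  · rw [le_div_iff_of_neg hlogp]; linarith
  · rw [div_le_iff_of_neg hlogp]; linarith

/-- Let `ε ∈ (0,1/6)`, `n ≥ 1` with `36ε² ≤ n`. If
    `p ∈ ((1-√(1-36ε²/n))/2, (1+√(1-36ε²/n))/2)` and `ph ∈ (0,1)` with
    `|p - ph| ≤ ε√(p(1-p)/n)`, then `1/2 ≤ ln(ph)/ln(p) ≤ 3/2`. -/
theorem log_ratio_bounds (ε : ℝ) (n : ℕ) (hn : 1 ≤ n) (hε0 : 0 < ε) (hε : ε < 1/6)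
    (h36 : 36 * ε ^ 2 ≤ n) (p ph : ℝ)
    (hpl : (1 - Real.sqrt (1 - 36 * ε ^ 2 / n)) / 2 < p)
    (hpu : p < (1 + Real.sqrt (1 - 36 * ε ^ 2 / n)) / 2)
    (hph0 : 0 < ph) (hph1 : ph < 1)
    (hclose : |p - ph| ≤ ε * Real.sqrt (p * (1 - p) / n)) :
    1/2 ≤ Real.log ph / Real.log p ∧ Real.log ph / Real.log p ≤ 3/2 :=
  log_ratio_bounds_general ε n p ph hpl hpu hclose
end

section
/- For all a ≥ 0, Komatsu's inequality holds: 2·e^{−a²/2}/(√(a²+4) + a) ≤ ∫_a^∞ e^{−t²/2} dt ≤ 2·e^{−a²/2}/(√(a²+2) + a). -/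
open Real MeasureTheory Set Filter intervalIntegral

noncomputable section KomatsuAux

private lemma g_int : Integrable (fun t : ℝ => Real.exp (-t ^ 2 / 2)) := by
  have := integrable_exp_neg_mul_sq (b := 1/2) (by norm_num)
  convert this using 2 with x
  ring_nf

private lemma g_cont : Continuous (fun t : ℝ => Real.exp (-t ^ 2 / 2)) := by
  continuity

private lemma split (x : ℝ) (hx : 0 ≤ x) :
    (∫ t in Set.Ioi x, Real.exp (-t ^ 2 / 2)) =
      (∫ t in Set.Ioi (0:ℝ), Real.exp (-t ^ 2 / 2)) - ∫ t in (0:ℝ)..x, Real.exp (-t ^ 2 / 2) := by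
  rw [intervalIntegral.integral_of_le hx, eq_sub_iff_add_eq, add_comm,
    ← MeasureTheory.setIntegral_union (Set.Ioc_disjoint_Ioi le_rfl) measurableSet_Ioi
      g_int.integrableOn g_int.integrableOn, Set.Ioc_union_Ioi_eq_Ioi hx]

private lemma hasDerivAt_F (x : ℝ) :
    HasDerivAt (fun y : ℝ => (∫ t in Set.Ioi (0:ℝ), Real.exp (-t ^ 2 / 2))
        - ∫ t in (0:ℝ)..y, Real.exp (-t ^ 2 / 2)) (-(Real.exp (-x ^ 2 / 2))) x := by
  have h := intervalIntegral.integral_hasDerivAt_right (f := fun t : ℝ => Real.exp (-t ^ 2 / 2))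
    (g_int.intervalIntegrable (a := 0) (b := x)) (g_cont.stronglyMeasurableAtFilter _ _) g_cont.continuousAt
  exact h.const_sub _

private lemma hasDerivAt_B (c x : ℝ) (hc : 0 < c) (hx : 0 ≤ x) :
    HasDerivAt (fun y : ℝ => 2 * Real.exp (-y ^ 2 / 2) / (Real.sqrt (y ^ 2 + c) + y))
      ((2 * (Real.exp (-x ^ 2 / 2) * (-x)) * (Real.sqrt (x ^ 2 + c) + x)
        - 2 * Real.exp (-x ^ 2 / 2) * (x / Real.sqrt (x ^ 2 + c) + 1))
        / (Real.sqrt (x ^ 2 + c) + x) ^ 2) x := by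
  have hpos : 0 < x ^ 2 + c := by positivity
  have hspos : 0 < Real.sqrt (x ^ 2 + c) := Real.sqrt_pos.2 hpos
  have hinner : HasDerivAt (fun y : ℝ => y ^ 2 + c) (2 * x) x := by
    simpa using (hasDerivAt_pow 2 x).add_const c
  have hs : HasDerivAt (fun y : ℝ => Real.sqrt (y ^ 2 + c)) (x / Real.sqrt (x ^ 2 + c)) x := by
    have := (Real.hasDerivAt_sqrt (ne_of_gt hpos)).comp x hinner
    refine this.congr_deriv ?_
    field_simp
  have hexp : HasDerivAt (fun y : ℝ => Real.exp (-y ^ 2 / 2)) (Real.exp (-x ^ 2 / 2) * (-x)) x := by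
    have h1 : HasDerivAt (fun y : ℝ => -y ^ 2 / 2) (-x) x := by
      have := ((hasDerivAt_pow 2 x).neg).div_const 2
      refine this.congr_deriv ?_; ring
    exact h1.exp
  have hden : HasDerivAt (fun y : ℝ => Real.sqrt (y ^ 2 + c) + y) (x / Real.sqrt (x ^ 2 + c) + 1) x :=
    hs.add (hasDerivAt_id x)
  exact (hexp.const_mul 2).div hden (by positivity)

private lemma deriv_expr_sign (c x : ℝ) (hc : 0 < c) (hx : 0 ≤ x) :
    Real.sqrt (x ^ 2 + c) *
      ((2 * (Real.exp (-x ^ 2 / 2) * (-x)) * (Real.sqrt (x ^ 2 + c) + x)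
        - 2 * Real.exp (-x ^ 2 / 2) * (x / Real.sqrt (x ^ 2 + c) + 1))
        / (Real.sqrt (x ^ 2 + c) + x) ^ 2 + Real.exp (-x ^ 2 / 2))
      = Real.exp (-x ^ 2 / 2) * (x ^ 2 + c - 2 - x * Real.sqrt (x ^ 2 + c))
          * Real.sqrt (x ^ 2 + c) / ((Real.sqrt (x ^ 2 + c) + x) * Real.sqrt (x ^ 2 + c)) := by
  have hpos : 0 < x ^ 2 + c := by positivity
  have hspos : 0 < Real.sqrt (x ^ 2 + c) := Real.sqrt_pos.2 hpos
  have hs2 : Real.sqrt (x ^ 2 + c) ^ 2 = x ^ 2 + c := Real.sq_sqrt hpos.le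
  have hsx : 0 < Real.sqrt (x ^ 2 + c) + x := by positivity
  obtain ⟨s, hs⟩ : ∃ s, s = Real.sqrt (x ^ 2 + c) := ⟨_, rfl⟩
  rw [← hs] at hspos hs2 hsx ⊢
  have hc2 : c = s ^ 2 - x ^ 2 := by linarith
  subst hc2
  field_simp
  ring

private lemma tendsto_F :
    Tendsto (fun y : ℝ => (∫ t in Set.Ioi (0:ℝ), Real.exp (-t ^ 2 / 2))
        - ∫ t in (0:ℝ)..y, Real.exp (-t ^ 2 / 2)) atTop (nhds 0) := by
  have h := MeasureTheory.intervalIntegral_tendsto_integral_Ioi (μ := volume) 0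
    (g_int.integrableOn) tendsto_id
  have h2 := (tendsto_const_nhds
    (x := (∫ t in Set.Ioi (0:ℝ), Real.exp (-t ^ 2 / 2))) (f := atTop)).sub h
  rw [sub_self] at h2
  exact h2

private lemma tendsto_B (c : ℝ) (hc : 0 < c) :
    Tendsto (fun y : ℝ => 2 * Real.exp (-y ^ 2 / 2) / (Real.sqrt (y ^ 2 + c) + y))
      atTop (nhds 0) := by
  have hp : Tendsto (fun y : ℝ => y ^ 2 / 2) atTop atTop :=
    (tendsto_pow_atTop (two_ne_zero)).atTop_div_const (by norm_num)
  have h1 : Tendsto (fun y : ℝ => -y ^ 2 / 2) atTop atBot := by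
    simpa [neg_div, Function.comp_def] using tendsto_neg_atTop_atBot.comp hp
  have h2 : Tendsto (fun y : ℝ => Real.exp (-y ^ 2 / 2)) atTop (nhds 0) :=
    Real.tendsto_exp_atBot.comp h1
  have h3 : Tendsto (fun y : ℝ => Real.sqrt (y ^ 2 + c) + y) atTop atTop :=
    tendsto_atTop_mono (fun y => le_add_of_nonneg_left (Real.sqrt_nonneg _)) tendsto_id
  have := (h2.const_mul 2).mul h3.inv_tendsto_atTop
  simpa [div_eq_mul_inv] using this

end KomatsuAux

/-- Komatsu's inequalities: for all `a ≥ 0`,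
    `2e^{-a²/2}/(√(a²+4)+a) ≤ ∫_a^∞ e^{-t²/2} dt ≤ 2e^{-a²/2}/(√(a²+2)+a)`. -/
theorem komatsu_inequalities (a : ℝ) (ha : 0 ≤ a) :
    2 * Real.exp (-a ^ 2 / 2) / (Real.sqrt (a ^ 2 + 4) + a) ≤
        (∫ t in Set.Ioi a, Real.exp (-t ^ 2 / 2)) ∧
      (∫ t in Set.Ioi a, Real.exp (-t ^ 2 / 2)) ≤
        2 * Real.exp (-a ^ 2 / 2) / (Real.sqrt (a ^ 2 + 2) + a) := by
  have hderiv : ∀ c x : ℝ, 0 < c → 0 ≤ x →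
      deriv (fun y => 2 * Real.exp (-y ^ 2 / 2) / (Real.sqrt (y ^ 2 + c) + y)
        - ((∫ t in Set.Ioi (0:ℝ), Real.exp (-t ^ 2 / 2))
            - ∫ t in (0:ℝ)..y, Real.exp (-t ^ 2 / 2))) x
      = (2 * (Real.exp (-x ^ 2 / 2) * (-x)) * (Real.sqrt (x ^ 2 + c) + x)
          - 2 * Real.exp (-x ^ 2 / 2) * (x / Real.sqrt (x ^ 2 + c) + 1))
          / (Real.sqrt (x ^ 2 + c) + x) ^ 2 + Real.exp (-x ^ 2 / 2) := by
    intro c x hc hx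
    have h := (hasDerivAt_B c x hc hx).sub (hasDerivAt_F x)
    exact h.deriv.trans (by ring)
  have hdiff : ∀ c x : ℝ, 0 < c → 0 ≤ x →
      DifferentiableAt ℝ (fun y => 2 * Real.exp (-y ^ 2 / 2) / (Real.sqrt (y ^ 2 + c) + y)
        - ((∫ t in Set.Ioi (0:ℝ), Real.exp (-t ^ 2 / 2))
            - ∫ t in (0:ℝ)..y, Real.exp (-t ^ 2 / 2))) x :=
    fun c x hc hx => ((hasDerivAt_B c x hc hx).sub (hasDerivAt_F x)).differentiableAt
  have hcont : ∀ c : ℝ, 0 < c →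
      ContinuousOn (fun y => 2 * Real.exp (-y ^ 2 / 2) / (Real.sqrt (y ^ 2 + c) + y)
        - ((∫ t in Set.Ioi (0:ℝ), Real.exp (-t ^ 2 / 2))
            - ∫ t in (0:ℝ)..y, Real.exp (-t ^ 2 / 2))) (Set.Ici 0) :=
    fun c hc x hx => (hdiff c x hc hx).continuousAt.continuousWithinAt
  have htend : ∀ c : ℝ, 0 < c →
      Tendsto (fun y => 2 * Real.exp (-y ^ 2 / 2) / (Real.sqrt (y ^ 2 + c) + y)
        - ((∫ t in Set.Ioi (0:ℝ), Real.exp (-t ^ 2 / 2))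
            - ∫ t in (0:ℝ)..y, Real.exp (-t ^ 2 / 2))) atTop (nhds 0) := by
    intro c hc
    have := (tendsto_B c hc).sub tendsto_F
    simpa using this
  -- upper bound, c = 2
  have hsign2 : ∀ x : ℝ, 0 ≤ x →
      deriv (fun y => 2 * Real.exp (-y ^ 2 / 2) / (Real.sqrt (y ^ 2 + 2) + y)
        - ((∫ t in Set.Ioi (0:ℝ), Real.exp (-t ^ 2 / 2))
            - ∫ t in (0:ℝ)..y, Real.exp (-t ^ 2 / 2))) x ≤ 0 := by
    intro x hx
    rw [hderiv 2 x two_pos hx]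
    have hpos : (0:ℝ) < x ^ 2 + 2 := by positivity
    have hspos : 0 < Real.sqrt (x ^ 2 + 2) := Real.sqrt_pos.2 hpos
    have hs2 : Real.sqrt (x ^ 2 + 2) ^ 2 = x ^ 2 + 2 := Real.sq_sqrt hpos.le
    have hxs : x ≤ Real.sqrt (x ^ 2 + 2) := by nlinarith [hs2, hspos]
    have key := deriv_expr_sign 2 x two_pos hx
    have hnum : Real.exp (-x ^ 2 / 2) * (x ^ 2 + 2 - 2 - x * Real.sqrt (x ^ 2 + 2))
        * Real.sqrt (x ^ 2 + 2) ≤ 0 := by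
      have : x ^ 2 + 2 - 2 - x * Real.sqrt (x ^ 2 + 2) ≤ 0 := by nlinarith [hxs, hx]
      have he : 0 < Real.exp (-x ^ 2 / 2) := Real.exp_pos _
      nlinarith [mul_nonneg he.le hspos.le]
    have hmul : Real.sqrt (x ^ 2 + 2) *
        ((2 * (Real.exp (-x ^ 2 / 2) * (-x)) * (Real.sqrt (x ^ 2 + 2) + x)
          - 2 * Real.exp (-x ^ 2 / 2) * (x / Real.sqrt (x ^ 2 + 2) + 1))
          / (Real.sqrt (x ^ 2 + 2) + x) ^ 2 + Real.exp (-x ^ 2 / 2)) ≤ 0 := by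
      rw [key]
      apply div_nonpos_of_nonpos_of_nonneg hnum
      positivity
    nlinarith [hmul, hspos]
  have hant : AntitoneOn (fun y => 2 * Real.exp (-y ^ 2 / 2) / (Real.sqrt (y ^ 2 + 2) + y)
        - ((∫ t in Set.Ioi (0:ℝ), Real.exp (-t ^ 2 / 2))
            - ∫ t in (0:ℝ)..y, Real.exp (-t ^ 2 / 2))) (Set.Ici 0) := by
    apply antitoneOn_of_deriv_nonpos (convex_Ici 0) (hcont 2 two_pos)
    · intro x hx
      rw [interior_Ici] at hx
      exact (hdiff 2 x two_pos hx.le).differentiableWithinAt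
    · intro x hx
      rw [interior_Ici] at hx
      exact hsign2 x hx.le
  have h2 : 0 ≤ 2 * Real.exp (-a ^ 2 / 2) / (Real.sqrt (a ^ 2 + 2) + a)
      - ((∫ t in Set.Ioi (0:ℝ), Real.exp (-t ^ 2 / 2))
          - ∫ t in (0:ℝ)..a, Real.exp (-t ^ 2 / 2)) := by
    refine le_of_tendsto (htend 2 two_pos) ?_
    filter_upwards [eventually_ge_atTop a] with b hb
    exact hant (Set.mem_Ici.2 ha) (Set.mem_Ici.2 (ha.trans hb)) hb
  -- lower bound, c = 4
  have hsign4 : ∀ x : ℝ, 0 ≤ x →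
      0 ≤ deriv (fun y => 2 * Real.exp (-y ^ 2 / 2) / (Real.sqrt (y ^ 2 + 4) + y)
        - ((∫ t in Set.Ioi (0:ℝ), Real.exp (-t ^ 2 / 2))
            - ∫ t in (0:ℝ)..y, Real.exp (-t ^ 2 / 2))) x := by
    intro x hx
    rw [hderiv 4 x four_pos hx]
    have hpos : (0:ℝ) < x ^ 2 + 4 := by positivity
    have hspos : 0 < Real.sqrt (x ^ 2 + 4) := Real.sqrt_pos.2 hpos
    have hs2 : Real.sqrt (x ^ 2 + 4) ^ 2 = x ^ 2 + 4 := Real.sq_sqrt hpos.le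
    have key := deriv_expr_sign 4 x four_pos hx
    have hnum : 0 ≤ Real.exp (-x ^ 2 / 2) * (x ^ 2 + 4 - 2 - x * Real.sqrt (x ^ 2 + 4))
        * Real.sqrt (x ^ 2 + 4) := by
      have hfac : 0 ≤ x ^ 2 + 2 - x * Real.sqrt (x ^ 2 + 4) := by
        nlinarith [hs2, hspos, hx, mul_nonneg hx hspos.le,
          sq_nonneg (x * Real.sqrt (x ^ 2 + 4) - x ^ 2 - 2)]
      have he : 0 < Real.exp (-x ^ 2 / 2) := Real.exp_pos _
      nlinarith [mul_nonneg he.le hspos.le]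
    have hmul : 0 ≤ Real.sqrt (x ^ 2 + 4) *
        ((2 * (Real.exp (-x ^ 2 / 2) * (-x)) * (Real.sqrt (x ^ 2 + 4) + x)
          - 2 * Real.exp (-x ^ 2 / 2) * (x / Real.sqrt (x ^ 2 + 4) + 1))
          / (Real.sqrt (x ^ 2 + 4) + x) ^ 2 + Real.exp (-x ^ 2 / 2)) := by
      rw [key]
      apply div_nonneg hnum
      positivity
    nlinarith [hmul, hspos]
  have hmono : MonotoneOn (fun y => 2 * Real.exp (-y ^ 2 / 2) / (Real.sqrt (y ^ 2 + 4) + y)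
        - ((∫ t in Set.Ioi (0:ℝ), Real.exp (-t ^ 2 / 2))
            - ∫ t in (0:ℝ)..y, Real.exp (-t ^ 2 / 2))) (Set.Ici 0) := by
    apply monotoneOn_of_deriv_nonneg (convex_Ici 0) (hcont 4 four_pos)
    · intro x hx
      rw [interior_Ici] at hx
      exact (hdiff 4 x four_pos hx.le).differentiableWithinAt
    · intro x hx
      rw [interior_Ici] at hx
      exact hsign4 x hx.le
  have h4 : 2 * Real.exp (-a ^ 2 / 2) / (Real.sqrt (a ^ 2 + 4) + a)
      - ((∫ t in Set.Ioi (0:ℝ), Real.exp (-t ^ 2 / 2))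
          - ∫ t in (0:ℝ)..a, Real.exp (-t ^ 2 / 2)) ≤ 0 := by
    refine ge_of_tendsto (htend 4 four_pos) ?_
    filter_upwards [eventually_ge_atTop a] with b hb
    exact hmono (Set.mem_Ici.2 ha) (Set.mem_Ici.2 (ha.trans hb)) hb
  rw [split a ha]
  constructor <;> linarith
end

section
/- Let i ∈ {0,1,…,s−1}, let c ≥ 2 be a constant, ε ≤ 1/(6c), n ≥ e^{2c}, and let ℓᵢ = (c·ln n)^{s−i}/c where s satisfies (c·ln n)^s = n. If αᵢ, βᵢ ∈ {1,2,…,⌊√(ln n)⌋} with αᵢ < βᵢ, then (1 − αᵢ/(c·ℓᵢ))^{ℓᵢ} − (1 − βᵢ/(c·ℓᵢ))^{ℓᵢ} > 4ε/√(n/s). -/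
/-!
Put `L = log n ≥ 2c`; then `s ≤ L` (as `s log (cL) = L`), `ℓ ≥ L` and `β ≤ √L`. With
`a = 1 - α/(cℓ) ≥ b = 1 - β/(cℓ)`, Bernoulli's inequality for `(a/b)^ℓ` gives
`a^ℓ - b^ℓ ≥ ℓ (a - b) b^ℓ ≥ b^ℓ / c`, and `1 - x ≥ e^{-4x/3}` on `[0, 1/4]` gives
`b^ℓ ≥ e^{-(2/3)√L}`. Since `4ε ≤ 2/(3c)`, it remains to see that
`√(n/s) ≥ e^{L/2}/√L` beats `(2/3) e^{(2/3)√L}`.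
-/

open Real

theorem exp_neg_four_thirds_mul_le_one_sub {x : ℝ} (hx0 : 0 ≤ x) (hx : x ≤ 1 / 4) :
    exp (-(4 / 3) * x) ≤ 1 - x := by
  have hexp : exp (-(4 / 3) * x) * exp (4 / 3 * x) = 1 := by rw [← exp_add]; simp
  nlinarith [add_one_le_exp (4 / 3 * x), exp_pos (-(4 / 3) * x)]

theorem exp_neg_four_thirds_mul_mul_le_one_sub_rpow {x p : ℝ} (hx0 : 0 ≤ x) (hx : x ≤ 1 / 4)
    (hp : 0 ≤ p) : exp (-(4 / 3) * x * p) ≤ (1 - x) ^ p := by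
  rw [exp_mul]
  exact rpow_le_rpow (exp_pos _).le (exp_neg_four_thirds_mul_le_one_sub hx0 hx) hp

theorem mul_sub_mul_rpow_le_rpow_sub_rpow {a b p : ℝ} (hb : 0 < b) (hb1 : b ≤ 1) (hba : b ≤ a)
    (hp : 1 ≤ p) : p * (a - b) * b ^ p ≤ a ^ p - b ^ p := by
  have hquot : a - b ≤ a / b - 1 := by
    rw [div_sub_one hb.ne', le_div_iff₀ hb]
    nlinarith
  have hbernoulli : 1 + p * (a / b - 1) ≤ (a / b) ^ p := by
    simpa using one_add_mul_self_le_rpow_one_add (s := a / b - 1) (by linarith) hp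
  have hsplit : a ^ p = (a / b) ^ p * b ^ p := by
    rw [← mul_rpow (div_nonneg (hb.le.trans hba) hb.le) hb.le, div_mul_cancel₀ _ hb.ne']
  calc p * (a - b) * b ^ p ≤ p * (a / b - 1) * b ^ p := by gcongr
    _ ≤ ((a / b) ^ p - 1) * b ^ p := by gcongr; linarith
    _ = a ^ p - b ^ p := by rw [hsplit]; ring

theorem four_ninths_mul_sq_mul_exp_lt_exp_sq (t : ℝ) :
    4 / 9 * t ^ 2 * exp (4 / 3 * t) < exp (t ^ 2) := by
  have hsplit : exp (t ^ 2) = exp (t ^ 2 - 4 / 3 * t) * exp (4 / 3 * t) := by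
    rw [← exp_add]; ring_nf
  rw [hsplit]
  gcongr
  nlinarith [add_one_le_exp (t ^ 2 - 4 / 3 * t), sq_nonneg (t - 6 / 5)]

theorem two_thirds_div_sqrt_exp_div_lt_exp_neg_sqrt {s L : ℝ} (hs : 0 < s) (hsL : s ≤ L) :
    2 / 3 / √(exp L / s) < exp (-(2 / 3) * √L) := by
  have hL : √L ^ 2 = L := sq_sqrt (hs.le.trans hsL)
  have hroot : 2 / 3 * exp (2 / 3 * √L) < √(exp L / s) := by
    rw [lt_sqrt (by positivity), lt_div_iff₀ hs]
    calc (2 / 3 * exp (2 / 3 * √L)) ^ 2 * s = 4 / 9 * s * exp (4 / 3 * √L) := by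
          rw [mul_pow, ← exp_nat_mul]; ring_nf
      _ ≤ 4 / 9 * √L ^ 2 * exp (4 / 3 * √L) := by rw [hL]; gcongr
      _ < exp (√L ^ 2) := four_ninths_mul_sq_mul_exp_lt_exp_sq _
      _ = exp L := by rw [hL]
  rw [div_lt_iff₀ ((by positivity : (0 : ℝ) < _).trans hroot), neg_mul, exp_neg,
    lt_inv_mul_iff₀ (exp_pos _)]
  linarith

theorem le_of_rpow_eq_exp {x s L : ℝ} (hx : exp 1 ≤ x) (hL : 0 ≤ L) (hs : x ^ s = exp L) :
    s ≤ L := by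
  have hlog : s * log x = L := by
    rw [← log_rpow ((exp_pos 1).trans_le hx), hs, log_exp]
  have hlogx : 1 ≤ log x := (le_log_iff_exp_le ((exp_pos 1).trans_le hx)).2 hx
  nlinarith

theorem le_rpow_sub_natCast_div {c L s : ℝ} {i : ℕ} (hc : 0 < c) (hcL : 1 ≤ c * L)
    (hi : (i : ℝ) ≤ s - 1) : L ≤ (c * L) ^ (s - i) / c := by
  rw [le_div_iff₀ hc, mul_comm]
  exact self_le_rpow_of_one_le hcL (by linarith)

theorem exp_neg_sqrt_le_one_sub_div_rpow {b c ℓ L : ℝ} (hc : 2 ≤ c) (hL : 4 ≤ L) (hℓ : L ≤ ℓ)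
    (hb0 : 0 ≤ b) (hb : b ≤ √L) : exp (-(2 / 3) * √L) ≤ (1 - b / (c * ℓ)) ^ ℓ := by
  have hc0 : 0 < c := by linarith
  have hℓ0 : 0 < ℓ := by linarith
  have hsqrtL : 2 ≤ √L := (le_sqrt (by norm_num) (by linarith)).2 (by linarith)
  have hx : b / (c * ℓ) ≤ 1 / 4 := by
    rw [div_le_div_iff₀ (by positivity) (by norm_num)]
    nlinarith [sq_sqrt (show 0 ≤ L by linarith)]
  have hbc : b / c ≤ √L / 2 := by
    rw [div_le_div_iff₀ hc0 (by norm_num)]; nlinarith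
  calc exp (-(2 / 3) * √L) ≤ exp (-(4 / 3) * (b / (c * ℓ)) * ℓ) := by
        rw [exp_le_exp, mul_assoc, div_mul_eq_div_div, div_mul_cancel₀ _ hℓ0.ne']
        linarith
    _ ≤ (1 - b / (c * ℓ)) ^ ℓ :=
        exp_neg_four_thirds_mul_mul_le_one_sub_rpow (by positivity) hx hℓ0.le

theorem one_sub_div_rpow_div_le_rpow_sub_rpow {a b c ℓ : ℝ} (hc : 0 < c) (hℓ : 1 ≤ ℓ)
    (ha : 0 ≤ a) (hab : a + 1 ≤ b) (hb : b < c * ℓ) :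
    (1 - b / (c * ℓ)) ^ ℓ / c ≤ (1 - a / (c * ℓ)) ^ ℓ - (1 - b / (c * ℓ)) ^ ℓ := by
  have hcℓ : 0 < c * ℓ := by positivity
  have hB : 0 < 1 - b / (c * ℓ) := by rw [sub_pos, div_lt_one hcℓ]; exact hb
  have hgap : ℓ * (1 - a / (c * ℓ) - (1 - b / (c * ℓ))) = (b - a) / c := by
    field_simp; ring
  refine le_trans ?_ (mul_sub_mul_rpow_le_rpow_sub_rpow hB ?_ ?_ hℓ)
  · rw [hgap, div_eq_inv_mul, ← one_div]
    gcongr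
    linarith
  · have : 0 ≤ b / (c * ℓ) := div_nonneg (by linarith) hcℓ.le
    linarith
  · gcongr
    linarith

theorem large_diff_general (c ε n s : ℝ) (i : ℕ) (α β : ℕ)
    (hc : 2 ≤ c) (hε : ε ≤ 1 / (6 * c))
    (hn : Real.exp (2 * c) ≤ n)
    (hs : (c * Real.log n) ^ s = n) (hi : (i : ℝ) ≤ s - 1)
    (hαβ : α < β) (hβ : β ≤ ⌊Real.sqrt (Real.log n)⌋₊)
    (ℓ : ℝ) (hℓ : ℓ = (c * Real.log n) ^ (s - (i : ℝ)) / c) :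
    (1 - (α : ℝ) / (c * ℓ)) ^ ℓ - (1 - (β : ℝ) / (c * ℓ)) ^ ℓ >
      4 * ε / Real.sqrt (n / s) := by
  have hc0 : 0 < c := by linarith
  have hn0 : 0 < n := (exp_pos _).trans_le hn
  set L := log n
  have hnL : exp L = n := exp_log hn0
  have hcL : 2 * c ≤ L := (le_log_iff_exp_le hn0).2 hn
  have hs0 : 0 < s := by linarith [(Nat.cast_nonneg i : (0 : ℝ) ≤ i)]
  have hsL : s ≤ L := le_of_rpow_eq_exp (by nlinarith [exp_one_lt_three]) (by linarith)
    (hs.trans hnL.symm)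
  have hℓL : L ≤ ℓ := hℓ ▸ le_rpow_sub_natCast_div hc0 (by nlinarith) hi
  have hβL : (β : ℝ) ≤ √L := (Nat.cast_le.2 hβ).trans (Nat.floor_le (sqrt_nonneg _))
  have hsqrtL : √L ≤ L := (sqrt_le_left (by linarith)).2 (by nlinarith)
  have hε' : 4 * ε ≤ 2 / 3 / c := by
    calc 4 * ε ≤ 4 * (1 / (6 * c)) := by linarith
      _ = 2 / 3 / c := by ring
  have hroot := two_thirds_div_sqrt_exp_div_lt_exp_neg_sqrt hs0 hsL
  rw [hnL] at hroot
  calc 4 * ε / √(n / s) ≤ 2 / 3 / c / √(n / s) := by gcongr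
    _ = 2 / 3 / √(n / s) / c := by ring
    _ < exp (-(2 / 3) * √L) / c := by gcongr
    _ ≤ (1 - β / (c * ℓ)) ^ ℓ / c := by
        gcongr
        exact exp_neg_sqrt_le_one_sub_div_rpow hc (by linarith) hℓL (Nat.cast_nonneg _) hβL
    _ ≤ _ := one_sub_div_rpow_div_le_rpow_sub_rpow hc0 (by linarith) (Nat.cast_nonneg _)
        (by exact_mod_cast hαβ) (by nlinarith)

/-- Lemma on separated parameters: let `c ≥ 2`, `0 < ε ≤ 1/(6c)`, `n ≥ e^{2c}`,
    let `s` satisfy `(c ln n)^s = n`, let `i ∈ {0,…,s-1}` and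
    `ℓᵢ = (c ln n)^{s-i}/c`. If `αᵢ, βᵢ ∈ {1,…,⌊√(ln n)⌋}` with `αᵢ < βᵢ`, then
    `(1 - αᵢ/(c ℓᵢ))^{ℓᵢ} - (1 - βᵢ/(c ℓᵢ))^{ℓᵢ} > 4ε/√(n/s)`. -/
theorem large_diff (c ε n s : ℝ) (i : ℕ) (α β : ℕ)
    (hc : 2 ≤ c) (hε0 : 0 < ε) (hε : ε ≤ 1 / (6 * c))
    (hn : Real.exp (2 * c) ≤ n)
    (hs : (c * Real.log n) ^ s = n) (hi : (i : ℝ) ≤ s - 1)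
    (hα1 : 1 ≤ α) (hαβ : α < β) (hβ : β ≤ ⌊Real.sqrt (Real.log n)⌋₊)
    (ℓ : ℝ) (hℓ : ℓ = (c * Real.log n) ^ (s - (i : ℝ)) / c) :
    (1 - (α : ℝ) / (c * ℓ)) ^ ℓ - (1 - (β : ℝ) / (c * ℓ)) ^ ℓ >
      4 * ε / Real.sqrt (n / s) :=
  large_diff_general c ε n s i α β hc hε hn hs hi hαβ hβ ℓ hℓ
end
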